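/- Suppose μ is even (μ(−y) = μ(y) for all y) and strictly decreasing on (0, ∞) (the flat highlighting case). Then for every η ≥ 0, POL is differentiable at η with POL′(η) < 0; i.e., increasing the weight on highlighting strictly decreases polarization (Proposition 1, flat case). -/

import Mathlib

open MeasureTheory

/-- Density of the normal distribution `N(0, σ²)`. -/
noncomputable def gauss (σ y : ℝ) : ℝ :=
  (Real.sqrt (2 * Real.pi * σ ^ 2))⁻¹ * Real.exp (-(y ^ 2) / (2 * σ ^ 2))

/-- Mean highlighting propensity `μ̄ = ∫ μ(y)·g(y) dy`. -/
noncomputable def mubar (σ : ℝ) (μ : ℝ → ℝ) : ℝ :=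
  ∫ y : ℝ, μ y * gauss σ y

/-- Denominator `D(η,y) = M·(1 + η·μ̄) + η·(μ(y) − μ̄)`. -/
noncomputable def Dfun (σ : ℝ) (μ : ℝ → ℝ) (M η y : ℝ) : ℝ :=
  M * (1 + η * mubar σ μ) + η * (μ y - mubar σ μ)

/-- Expected popularity `π(η,y) = (1 + η·μ(y))/D(η,y)`. -/
noncomputable def popEx (σ : ℝ) (μ : ℝ → ℝ) (M η y : ℝ) : ℝ :=
  (1 + η * μ y) / Dfun σ μ M η y

/-- The affine clicking response
`Λ(z) = (M + log β·(M − ζ₀ + ζ₁·z))/(M + log β·M·(M − 1)/2)`. -/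
noncomputable def Lam (M β ζ₀ ζ₁ z : ℝ) : ℝ :=
  (M + Real.log β * (M - ζ₀ + ζ₁ * z)) / (M + Real.log β * M * (M - 1) / 2)

/-- The slope of `Λ`: `s = ζ₁·log β/(M + log β·M·(M − 1)/2)`. -/
noncomputable def slopeLam (M β ζ₁ : ℝ) : ℝ :=
  ζ₁ * Real.log β / (M + Real.log β * M * (M - 1) / 2)

/-- Polarization
`POL(η) = 2·∫_{(0,∞)} y·(Λ_R(π(η,y)) − Λ_L(π(η,y)))·g(y) dy`,
where `Λ_R(z) = cR0 + cR1·z` and `Λ_L(z) = cL0 + cL1·z`. -/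
noncomputable def POL (σ : ℝ) (μ : ℝ → ℝ) (M cR0 cR1 cL0 cL1 η : ℝ) : ℝ :=
  2 * ∫ y in Set.Ioi (0:ℝ),
    y * ((cR0 + cR1 * popEx σ μ M η y) - (cL0 + cL1 * popEx σ μ M η y)) *
      gauss σ y

lemma gauss_pos {σ : ℝ} (hσ : 0 < σ) (y : ℝ) : 0 < gauss σ y := by
  have : 0 < Real.sqrt (2 * Real.pi * σ ^ 2) :=
    Real.sqrt_pos.2 (by have := Real.pi_pos; positivity)
  unfold gauss; positivity

lemma integrable_gauss {σ : ℝ} (hσ : 0 < σ) : Integrable (gauss σ) := by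
  have hb : 0 < (2*σ^2)⁻¹ := by positivity
  have h := (integrable_exp_neg_mul_sq hb).const_mul (Real.sqrt (2 * Real.pi * σ ^ 2))⁻¹
  refine h.congr (Filter.Eventually.of_forall fun y => ?_)
  simp only [gauss]; ring_nf

lemma integral_gauss {σ : ℝ} (hσ : 0 < σ) : ∫ y, gauss σ y = 1 := by
  have h := ProbabilityTheory.integral_gaussianPDFReal_eq_one 0 (v := ⟨σ^2, sq_nonneg σ⟩)
    (fun h0 => pow_ne_zero 2 hσ.ne' (congrArg NNReal.toReal h0))
  rw [← h]; congr 1; ext y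
  simp [gauss, ProbabilityTheory.gaussianPDFReal]; rfl

lemma integrableOn_id_mul_gauss {σ : ℝ} (hσ : 0 < σ) :
    IntegrableOn (fun y => y * gauss σ y) (Set.Ioi 0) := by
  have hb : 0 < (2*σ^2)⁻¹ := by positivity
  have h : IntegrableOn (fun x : ℝ => (Real.sqrt (2 * Real.pi * σ ^ 2))⁻¹ *
      (x ^ (1:ℝ) * Real.exp (-(2*σ^2)⁻¹ * x ^ 2))) (Set.Ioi 0) :=
    (integrableOn_rpow_mul_exp_neg_mul_sq hb (s := 1) (by norm_num)).const_mul _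
  refine IntegrableOn.congr_fun h (fun y hy => ?_) measurableSet_Ioi
  simp only [gauss, Real.rpow_one]; ring_nf

lemma integrable_mu_mul_gauss {σ : ℝ} (hσ : 0 < σ) {μ : ℝ → ℝ} (hμmeas : Measurable μ)
    (hμ : ∀ y, μ y ∈ Set.Icc (0:ℝ) 1) : Integrable (fun y => μ y * gauss σ y) := by
  refine (integrable_gauss hσ).mono' (Measurable.aestronglyMeasurable (by unfold gauss; fun_prop)) ?_
  refine Filter.Eventually.of_forall fun y => ?_
  rw [Real.norm_eq_abs, abs_mul, abs_of_nonneg (hμ y).1, abs_of_nonneg (gauss_pos hσ y).le]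
  exact mul_le_of_le_one_left (gauss_pos hσ y).le (hμ y).2

lemma mubar_mem {σ : ℝ} (hσ : 0 < σ) {μ : ℝ → ℝ} (hμmeas : Measurable μ)
    (hμ : ∀ y, μ y ∈ Set.Icc (0:ℝ) 1) : mubar σ μ ∈ Set.Icc (0:ℝ) 1 := by
  constructor
  · exact integral_nonneg fun y => mul_nonneg (hμ y).1 (gauss_pos hσ y).le
  · rw [← integral_gauss hσ]
    exact integral_mono (integrable_mu_mul_gauss hσ hμmeas hμ) (integrable_gauss hσ)
      fun y => mul_le_of_le_one_left (gauss_pos hσ y).le (hμ y).2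

lemma integral_Ioi_mu_sub {σ : ℝ} (hσ : 0 < σ) {μ : ℝ → ℝ} (hμmeas : Measurable μ)
    (hμ : ∀ y, μ y ∈ Set.Icc (0:ℝ) 1) (heven : ∀ y, μ (-y) = μ y) :
    ∫ y in Set.Ioi (0:ℝ), (μ y - mubar σ μ) * gauss σ y = 0 := by
  set f := fun y => (μ y - mubar σ μ) * gauss σ y with hf
  have hint : Integrable f := by
    have h2 : Integrable (fun y => mubar σ μ * gauss σ y) :=
      (integrable_gauss hσ).const_mul _
    have : f = fun y => μ y * gauss σ y - mubar σ μ * gauss σ y := by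
      ext y; rw [hf]; ring
    rw [this]
    exact (integrable_mu_mul_gauss hσ hμmeas hμ).sub h2
  have htotal : ∫ y, f y = 0 := by
    have : ∫ y, f y = (∫ y, μ y * gauss σ y) - ∫ y, mubar σ μ * gauss σ y := by
      rw [← integral_sub (integrable_mu_mul_gauss hσ hμmeas hμ)
        ((integrable_gauss hσ).const_mul _)]
      congr 1; ext y; rw [hf]; ring
    rw [this, integral_const_mul, integral_gauss hσ, mul_one, mubar, sub_self]
  have hgeven : ∀ y, f (-y) = f y := by
    intro y; rw [hf]; simp only [heven, gauss, neg_sq]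
  have hsplit : (∫ y, f y) = (∫ y in Set.Iic (0:ℝ), f y) + ∫ y in Set.Ioi (0:ℝ), f y := by
    rw [← integral_add_compl measurableSet_Iic hint, Set.compl_Iic]
  have hhalf : (∫ y in Set.Iic (0:ℝ), f y) = ∫ y in Set.Ioi (0:ℝ), f y := by
    have h := integral_comp_neg_Iic (0:ℝ) f
    rw [neg_zero] at h
    rw [← h]
    exact setIntegral_congr_fun measurableSet_Iic fun y _ => (hgeven y).symm
  rw [hsplit, hhalf] at htotal
  linarith

lemma integrable_sub_mul_gauss {σ : ℝ} (hσ : 0 < σ) {μ : ℝ → ℝ} (hμmeas : Measurable μ)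
    (hμ : ∀ y, μ y ∈ Set.Icc (0:ℝ) 1) :
    Integrable (fun y => (μ y - mubar σ μ) * gauss σ y) := by
  have : (fun y => (μ y - mubar σ μ) * gauss σ y)
      = fun y => μ y * gauss σ y - mubar σ μ * gauss σ y := by ext y; ring
  rw [this]
  exact (integrable_mu_mul_gauss hσ hμmeas hμ).sub ((integrable_gauss hσ).const_mul _)

lemma key_I_neg {σ : ℝ} (hσ : 0 < σ) {μ : ℝ → ℝ} (hμmeas : Measurable μ)
    (hμ : ∀ y, μ y ∈ Set.Icc (0:ℝ) 1) {M : ℝ} (hM : 2 ≤ M)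
    (heven : ∀ y, μ (-y) = μ y) (hanti : StrictAntiOn μ (Set.Ioi (0:ℝ)))
    {η : ℝ} (hη : 0 ≤ η) :
    ∫ y in Set.Ioi (0:ℝ),
      y * ((μ y - mubar σ μ) / (Dfun σ μ M η y) ^ 2) * gauss σ y < 0 := by
  have hm0 := (mubar_mem hσ hμmeas hμ).1
  have hm1 := (mubar_mem hσ hμmeas hμ).2
  set m := mubar σ μ with hm_def
  set D0 : ℝ := M * (1 + η * m) with hD0_def
  have hD0 : M ≤ D0 := by
    nlinarith [mul_nonneg (mul_nonneg (by linarith : (0:ℝ) ≤ M) hη) hm0]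
  have hD0pos : 0 < D0 := by linarith
  have hD : ∀ y, M ≤ Dfun σ μ M η y := by
    intro y
    have h1 := (hμ y).1
    simp only [Dfun, ← hm_def]
    nlinarith [mul_nonneg hη h1, mul_nonneg (mul_nonneg hη hm0) (by linarith : (0:ℝ) ≤ M - 1)]
  have hDpos : ∀ y, 0 < Dfun σ μ M η y := fun y => lt_of_lt_of_le (by linarith) (hD y)
  -- φ ≤ ψ pointwise
  have hφψ : ∀ y, (μ y - m) / (Dfun σ μ M η y) ^ 2 ≤ (μ y - m) / D0 ^ 2 := by
    intro y
    rw [div_le_div_iff₀ (pow_pos (hDpos y) 2) (pow_pos hD0pos 2)]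
    have expand : (μ y - m) * Dfun σ μ M η y ^ 2 - (μ y - m) * D0 ^ 2
        = η * (μ y - m) ^ 2 * (D0 + Dfun σ μ M η y) := by
      simp only [Dfun, hD0_def, ← hm_def]; ring
    nlinarith [sq_nonneg (μ y - m), hDpos y, hD0pos,
      mul_nonneg (mul_nonneg hη (sq_nonneg (μ y - m))) (by linarith [hDpos y, hD0pos] :
        (0:ℝ) ≤ D0 + Dfun σ μ M η y)]
  -- ∫ ψ g = 0
  have hIzero := integral_Ioi_mu_sub hσ hμmeas hμ heven
  rw [← hm_def] at hIzero
  have hIψ : ∫ y in Set.Ioi (0:ℝ), (μ y - m) / D0 ^ 2 * gauss σ y = 0 := by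
    have : (fun y => (μ y - m) / D0 ^ 2 * gauss σ y)
        = fun y => ((μ y - m) * gauss σ y) / D0 ^ 2 := by ext y; ring
    rw [this, integral_div, hIzero, zero_div]
  -- S nonempty
  have hS : {y : ℝ | 0 < y ∧ μ y < m}.Nonempty := by
    by_contra hSempty
    push_neg at hSempty
    simp only [Set.not_nonempty_iff_eq_empty, Set.eq_empty_iff_forall_notMem,
      Set.mem_setOf_eq, not_and, not_lt] at hSempty
    have hnn : 0 ≤ᵐ[volume.restrict (Set.Ioi (0:ℝ))]
        fun y => (μ y - m) * gauss σ y := by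
      filter_upwards [ae_restrict_mem measurableSet_Ioi] with y hy
      exact mul_nonneg (by linarith [hSempty y hy]) (gauss_pos hσ y).le
    have hae := (setIntegral_eq_zero_iff_of_nonneg_ae hnn
      (integrable_sub_mul_gauss hσ hμmeas hμ).integrableOn).1 hIzero
    -- a.e. equality means {y ∈ Ioi 0 | μ y ≠ m} is null
    have hmeasf : Measurable (fun y => (μ y - m) * gauss σ y) := by
      have : Measurable (gauss σ) := by unfold gauss; fun_prop
      fun_prop
    have hnull : volume ({y | (μ y - m) * gauss σ y ≠ 0} ∩ Set.Ioi 0) = 0 := by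
      have := ae_iff.1 hae
      rwa [Measure.restrict_apply₀ (by
        exact (hmeasf (measurableSet_singleton 0).compl).nullMeasurableSet)] at this
    set A := {y : ℝ | (μ y - m) * gauss σ y = 0} ∩ Set.Ioi 0 with hA_def
    have hsub : Set.Ioi (0:ℝ) ⊆ A ∪ ({y | (μ y - m) * gauss σ y ≠ 0} ∩ Set.Ioi 0) := by
      intro y hy
      by_cases h : (μ y - m) * gauss σ y = 0
      · exact Or.inl ⟨h, hy⟩
      · exact Or.inr ⟨h, hy⟩
    have hAnt : A.Nontrivial := by
      by_contra hns
      rw [Set.not_nontrivial_iff] at hns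
      have h1 : volume (Set.Ioi (0:ℝ)) ≤ volume A
          + volume ({y | (μ y - m) * gauss σ y ≠ 0} ∩ Set.Ioi 0) :=
        le_trans (measure_mono hsub) (measure_union_le _ _)
      rw [hns.measure_zero, hnull, Real.volume_Ioi] at h1
      simp at h1
    obtain ⟨y1, hy1, y2, hy2, hne⟩ := hAnt
    have hval : ∀ y ∈ A, μ y = m := by
      rintro y ⟨h0, _⟩
      rcases mul_eq_zero.1 h0 with h | h
      · linarith [h]
      · exact absurd h (gauss_pos hσ y).ne'
    rcases lt_or_gt_of_ne hne with hlt | hlt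
    · have := hanti hy1.2 hy2.2 hlt
      rw [hval y1 hy1, hval y2 hy2] at this; exact lt_irrefl _ this
    · have := hanti hy2.2 hy1.2 hlt
      rw [hval y1 hy1, hval y2 hy2] at this; exact lt_irrefl _ this
  -- the crossing point
  set y₀ : ℝ := sInf {y : ℝ | 0 < y ∧ μ y < m} with hy₀_def
  have hbdd : BddBelow {y : ℝ | 0 < y ∧ μ y < m} := ⟨0, fun y hy => hy.1.le⟩
  have hy₀0 : 0 ≤ y₀ := le_csInf hS fun y hy => hy.1.le
  have habove : ∀ y, y₀ < y → μ y < m := by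
    intro y hy
    obtain ⟨s, hsS, hsy⟩ := exists_lt_of_csInf_lt hS hy
    have h0s : (0:ℝ) < s := hsS.1
    have := hanti (Set.mem_Ioi.2 h0s) (Set.mem_Ioi.2 (h0s.trans hsy)) hsy
    linarith [hsS.2]
  have hbelow : ∀ y, 0 < y → y < y₀ → m ≤ μ y := by
    intro y h0y hyy₀
    by_contra h
    push_neg at h
    exact absurd (csInf_le hbdd ⟨h0y, h⟩) (not_le.2 hyy₀)
  -- pointwise inequality
  have hpt : ∀ y ∈ Set.Ioi (0:ℝ),
      y * ((μ y - m) / (Dfun σ μ M η y) ^ 2) ≤ y₀ * ((μ y - m) / D0 ^ 2) := by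
    intro y hy
    rw [Set.mem_Ioi] at hy
    set φ := (μ y - m) / (Dfun σ μ M η y) ^ 2 with hφ_def
    set ψ := (μ y - m) / D0 ^ 2 with hψ_def
    have h2 : y₀ * φ ≤ y₀ * ψ := mul_le_mul_of_nonneg_left (hφψ y) hy₀0
    have h1 : (y - y₀) * φ ≤ 0 := by
      rcases lt_trichotomy y y₀ with hc | hc | hc
      · have hφ0 : 0 ≤ φ := div_nonneg (by linarith [hbelow y hy hc]) (sq_nonneg _)
        exact mul_nonpos_of_nonpos_of_nonneg (by linarith) hφ0
      · simp [hc]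
      · have hφ0 : φ ≤ 0 :=
          div_nonpos_of_nonpos_of_nonneg (by linarith [habove y hc]) (sq_nonneg _)
        exact mul_nonpos_of_nonneg_of_nonpos (by linarith) hφ0
    have h3 : y * φ = (y - y₀) * φ + y₀ * φ := by ring
    linarith
  -- integrability
  have hgmeas : Measurable (gauss σ) := by unfold gauss; fun_prop
  have hφg_int : IntegrableOn
      (fun y => y * ((μ y - m) / (Dfun σ μ M η y) ^ 2) * gauss σ y) (Set.Ioi 0) := by
    refine Integrable.mono' ((integrableOn_id_mul_gauss hσ).const_mul (1/4))
      (Measurable.aestronglyMeasurable (by simp only [Dfun]; fun_prop)) ?_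
    filter_upwards [ae_restrict_mem measurableSet_Ioi] with y hy
    rw [Set.mem_Ioi] at hy
    have habs : |(μ y - m) / (Dfun σ μ M η y) ^ 2| ≤ 1/4 := by
      rw [abs_div, abs_of_nonneg (sq_nonneg (Dfun σ μ M η y))]
      have h1 : |μ y - m| ≤ 1 := by
        rw [abs_le]; constructor
        · linarith [(hμ y).1]
        · linarith [(hμ y).2]
      have h2 : (4:ℝ) ≤ (Dfun σ μ M η y) ^ 2 := by nlinarith [hD y]
      exact div_le_div₀ zero_le_one h1 (by norm_num) h2
    rw [Real.norm_eq_abs, abs_mul, abs_mul, abs_of_pos hy,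
      abs_of_pos (gauss_pos hσ y)]
    have hstep : y * |(μ y - m) / (Dfun σ μ M η y) ^ 2| * gauss σ y
        ≤ y * (1/4) * gauss σ y :=
      mul_le_mul_of_nonneg_right (mul_le_mul_of_nonneg_left habs hy.le)
        (gauss_pos hσ y).le
    linarith
  have hψg_int : IntegrableOn (fun y => (μ y - m) / D0 ^ 2 * gauss σ y) (Set.Ioi 0) := by
    have h := ((integrable_sub_mul_gauss hσ hμmeas hμ).div_const (D0 ^ 2)).integrableOn
      (s := Set.Ioi (0:ℝ))
    refine h.congr_fun (fun y _ => ?_) measurableSet_Ioi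
    ring
  -- strict positivity of the slack integral
  have hpos : 0 < ∫ y in Set.Ioi (0:ℝ),
      (y₀ * ((μ y - m) / D0 ^ 2) - y * ((μ y - m) / (Dfun σ μ M η y) ^ 2)) * gauss σ y := by
    have h_int : IntegrableOn (fun y =>
        (y₀ * ((μ y - m) / D0 ^ 2) - y * ((μ y - m) / (Dfun σ μ M η y) ^ 2)) * gauss σ y)
        (Set.Ioi 0) := by
      have heq : (fun y =>
          (y₀ * ((μ y - m) / D0 ^ 2) - y * ((μ y - m) / (Dfun σ μ M η y) ^ 2)) * gauss σ y)
          = fun y => y₀ * ((μ y - m) / D0 ^ 2 * gauss σ y)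
            - y * ((μ y - m) / (Dfun σ μ M η y) ^ 2) * gauss σ y := by
        ext y; ring
      rw [heq]
      exact (hψg_int.const_mul y₀).sub hφg_int
    have h_nonneg : 0 ≤ᵐ[volume.restrict (Set.Ioi (0:ℝ))] fun y =>
        (y₀ * ((μ y - m) / D0 ^ 2) - y * ((μ y - m) / (Dfun σ μ M η y) ^ 2)) * gauss σ y := by
      filter_upwards [ae_restrict_mem measurableSet_Ioi] with y hy
      exact mul_nonneg (by linarith [hpt y hy]) (gauss_pos hσ y).le
    rw [setIntegral_pos_iff_support_of_nonneg_ae h_nonneg h_int]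
    have hsub : Set.Ioi y₀ ⊆ Function.support (fun y =>
        (y₀ * ((μ y - m) / D0 ^ 2) - y * ((μ y - m) / (Dfun σ μ M η y) ^ 2)) * gauss σ y)
        ∩ Set.Ioi 0 := by
      intro y hy
      rw [Set.mem_Ioi] at hy
      have h0y : (0:ℝ) < y := lt_of_le_of_lt hy₀0 hy
      refine ⟨?_, Set.mem_Ioi.2 h0y⟩
      have hμym : μ y < m := habove y hy
      have hφneg : (μ y - m) / (Dfun σ μ M η y) ^ 2 < 0 :=
        div_neg_of_neg_of_pos (by linarith) (pow_pos (hDpos y) 2)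
      have h1 : 0 < (y₀ - y) * ((μ y - m) / (Dfun σ μ M η y) ^ 2) :=
        mul_pos_of_neg_of_neg (by linarith) hφneg
      have h2 : y₀ * ((μ y - m) / (Dfun σ μ M η y) ^ 2) ≤ y₀ * ((μ y - m) / D0 ^ 2) :=
        mul_le_mul_of_nonneg_left (hφψ y) hy₀0
      have hslack : 0 < y₀ * ((μ y - m) / D0 ^ 2)
          - y * ((μ y - m) / (Dfun σ μ M η y) ^ 2) := by nlinarith
      exact (mul_pos hslack (gauss_pos hσ y)).ne'
    refine lt_of_lt_of_le ?_ (measure_mono hsub)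
    rw [Real.volume_Ioi]
    exact ENNReal.zero_lt_top
  -- conclude
  have hsplit : ∫ y in Set.Ioi (0:ℝ),
      (y₀ * ((μ y - m) / D0 ^ 2) - y * ((μ y - m) / (Dfun σ μ M η y) ^ 2)) * gauss σ y
      = y₀ * (∫ y in Set.Ioi (0:ℝ), (μ y - m) / D0 ^ 2 * gauss σ y)
        - ∫ y in Set.Ioi (0:ℝ), y * ((μ y - m) / (Dfun σ μ M η y) ^ 2) * gauss σ y := by
    rw [← integral_const_mul, ← integral_sub ((hψg_int.const_mul y₀)) hφg_int]
    congr 1; ext y; ring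
  rw [hsplit, hIψ, mul_zero, zero_sub] at hpos
  linarith

lemma hasDerivAt_popEx (σ : ℝ) (μ : ℝ → ℝ) (M x y : ℝ)
    (hD : Dfun σ μ M x y ≠ 0) :
    HasDerivAt (fun t => popEx σ μ M t y)
      ((M - 1) * (μ y - mubar σ μ) / (Dfun σ μ M x y) ^ 2) x := by
  have h1 : HasDerivAt (fun t : ℝ => 1 + t * μ y) (μ y) x := by
    simpa using ((hasDerivAt_id x).mul_const (μ y)).const_add 1
  have h2 : HasDerivAt (fun t => Dfun σ μ M t y)
      (M * mubar σ μ + (μ y - mubar σ μ)) x := by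
    simp only [Dfun]
    have ha : HasDerivAt (fun t : ℝ => M * (1 + t * mubar σ μ)) (M * mubar σ μ) x := by
      simpa using (((hasDerivAt_id x).mul_const (mubar σ μ)).const_add 1).const_mul M
    have hb : HasDerivAt (fun t : ℝ => t * (μ y - mubar σ μ)) (μ y - mubar σ μ) x := by
      simpa using (hasDerivAt_id x).mul_const (μ y - mubar σ μ)
    exact ha.add hb
  have h3 := h1.div h2 hD
  have key : (μ y * Dfun σ μ M x y - (1 + x * μ y) * (M * mubar σ μ + (μ y - mubar σ μ)))
      / (Dfun σ μ M x y) ^ 2 = (M - 1) * (μ y - mubar σ μ) / (Dfun σ μ M x y) ^ 2 := by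
    rw [div_eq_div_iff (pow_ne_zero 2 hD) (pow_ne_zero 2 hD)]
    simp only [Dfun]; ring
  rw [key] at h3
  exact h3

lemma measurable_popEx (σ : ℝ) (μ : ℝ → ℝ) (hμmeas : Measurable μ) (M x : ℝ) :
    Measurable (fun y => popEx σ μ M x y) := by
  unfold popEx Dfun
  fun_prop

lemma measurable_gauss (σ : ℝ) : Measurable (gauss σ) := by
  unfold gauss; fun_prop

/-- If `μ` is even and strictly decreasing on `(0, ∞)` (flat
case), then for every `η ≥ 0`, `POL` is differentiable at `η` with
`POL′(η) < 0`: increasing the weight on highlighting strictly decreases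
polarization. -/
theorem POL_deriv_neg_flat (σ : ℝ) (hσ : 0 < σ)
    (μ : ℝ → ℝ) (hμmeas : Measurable μ) (hμ : ∀ y, μ y ∈ Set.Icc (0:ℝ) 1)
    (M : ℝ) (hM : 2 ≤ M) (cR0 cR1 cL0 cL1 : ℝ)
    (hcL1 : 0 ≤ cL1) (hslopes : cL1 < cR1)
    (heven : ∀ y, μ (-y) = μ y)
    (hanti : StrictAntiOn μ (Set.Ioi (0:ℝ))) :
    ∀ η : ℝ, 0 ≤ η →
      DifferentiableAt ℝ (POL σ μ M cR0 cR1 cL0 cL1) η ∧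
        deriv (POL σ μ M cR0 cR1 cL0 cL1) η < 0 := by
  intro η hη
  have hm0 := (mubar_mem hσ hμmeas hμ).1
  have hm1 := (mubar_mem hσ hμmeas hμ).2
  have hgmeas : Measurable (gauss σ) := by unfold gauss; fun_prop
  set C : ℝ := (cR1 - cL1) * (M - 1) with hC_def
  have hC : 0 < C := mul_pos (sub_pos.2 hslopes) (by linarith)
  -- denominator bound on the ball
  have hDball : ∀ x ∈ Metric.ball η (1/2), ∀ y, M / 2 ≤ Dfun σ μ M x y := by
    intro x hx y
    rw [Metric.mem_ball, Real.dist_eq, abs_lt] at hx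
    have h1 := (hμ y).1
    have h2 := (hμ y).2
    have hB0 : (0:ℝ) ≤ (M - 1) * mubar σ μ + μ y :=
      add_nonneg (mul_nonneg (by linarith) hm0) h1
    have hBM : (M - 1) * mubar σ μ + μ y ≤ M := by nlinarith
    have hexp : Dfun σ μ M x y = M + x * ((M - 1) * mubar σ μ + μ y) := by
      simp only [Dfun]; ring
    rw [hexp]
    rcases le_or_gt 0 x with hx0 | hx0
    · nlinarith [mul_nonneg hx0 hB0]
    · nlinarith [mul_nonneg (by linarith : (0:ℝ) ≤ -x)
        (by linarith : (0:ℝ) ≤ M - ((M - 1) * mubar σ μ + μ y)),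
        mul_nonneg (by linarith : (0:ℝ) ≤ x + 1/2) (by linarith : (0:ℝ) ≤ M)]
  have hDball_pos : ∀ x ∈ Metric.ball η (1/2), ∀ y, 0 < Dfun σ μ M x y :=
    fun x hx y => lt_of_lt_of_le (by linarith) (hDball x hx y)
  have hself : η ∈ Metric.ball η (1/2) := Metric.mem_ball_self (by norm_num)
  -- the family and its derivative
  set F : ℝ → ℝ → ℝ := fun x y =>
    y * ((cR0 + cR1 * popEx σ μ M x y) - (cL0 + cL1 * popEx σ μ M x y)) * gauss σ y
    with hF_def
  set F' : ℝ → ℝ → ℝ := fun x y =>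
    C * ((μ y - mubar σ μ) / (Dfun σ μ M x y) ^ 2) * (y * gauss σ y) with hF'_def
  have habs1 : ∀ y, |μ y - mubar σ μ| ≤ 1 := by
    intro y
    rw [abs_le]
    constructor
    · linarith [(hμ y).1]
    · linarith [(hμ y).2]
  -- measurability
  have hFmeas : ∀ x, Measurable (F x) := by
    intro x
    simp only [hF_def, popEx, Dfun]
    fun_prop
  have hF'meas : ∀ x, Measurable (F' x) := by
    intro x
    simp only [hF'_def, Dfun]
    fun_prop
  -- integrability of F η
  have hF_int : Integrable (F η) (volume.restrict (Set.Ioi 0)) := by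
    refine Integrable.mono'
      ((integrableOn_id_mul_gauss hσ).const_mul (|cR0 - cL0| + (cR1 - cL1) * (1 + η)))
      (hFmeas η).aestronglyMeasurable ?_
    filter_upwards [ae_restrict_mem measurableSet_Ioi] with y hy
    rw [Set.mem_Ioi] at hy
    have hgpos := gauss_pos hσ y
    have hDy := hDball η hself y
    have hp0 : 0 ≤ popEx σ μ M η y := by
      simp only [popEx]
      exact div_nonneg (by nlinarith [mul_nonneg hη (hμ y).1]) (by linarith)
    have hple : popEx σ μ M η y ≤ 1 + η := by
      simp only [popEx]
      have hnum : 1 + η * μ y ≤ 1 + η := by nlinarith [(hμ y).2]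
      have hd1 : (0:ℝ) ≤ 1 + η * μ y := by nlinarith [mul_nonneg hη (hμ y).1]
      have hd2 : (1:ℝ) ≤ Dfun σ μ M η y := by linarith
      exact (div_le_self hd1 hd2).trans hnum
    have hA : |(cR0 + cR1 * popEx σ μ M η y) - (cL0 + cL1 * popEx σ μ M η y)|
        ≤ |cR0 - cL0| + (cR1 - cL1) * (1 + η) := by
      have h1 : (cR0 + cR1 * popEx σ μ M η y) - (cL0 + cL1 * popEx σ μ M η y)
          = (cR0 - cL0) + (cR1 - cL1) * popEx σ μ M η y := by ring
      rw [h1]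
      refine (abs_add_le _ _).trans ?_
      have h2 : |(cR1 - cL1) * popEx σ μ M η y| = (cR1 - cL1) * popEx σ μ M η y :=
        abs_of_nonneg (mul_nonneg (by linarith) hp0)
      rw [h2]
      have := mul_le_mul_of_nonneg_left hple (by linarith : (0:ℝ) ≤ cR1 - cL1)
      linarith
    simp only [hF_def]
    rw [Real.norm_eq_abs, abs_mul, abs_mul, abs_of_pos hy, abs_of_pos hgpos]
    have hstep := mul_le_mul_of_nonneg_right
      (mul_le_mul_of_nonneg_left hA hy.le) hgpos.le
    have hring : y * (|cR0 - cL0| + (cR1 - cL1) * (1 + η)) * gauss σ y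
        = (|cR0 - cL0| + (cR1 - cL1) * (1 + η)) * (y * gauss σ y) := by ring
    linarith
  -- the uniform bound
  set bound : ℝ → ℝ := fun y => C * ((M/2)^2)⁻¹ * (|y| * gauss σ y) with hbound_def
  have hbound_int : Integrable bound (volume.restrict (Set.Ioi 0)) := by
    refine Integrable.congr ((integrableOn_id_mul_gauss hσ).const_mul (C * ((M/2)^2)⁻¹)) ?_
    filter_upwards [ae_restrict_mem measurableSet_Ioi] with y hy
    rw [Set.mem_Ioi] at hy
    simp only [hbound_def, abs_of_pos hy]
  have h_bound : ∀ᵐ y ∂(volume.restrict (Set.Ioi (0:ℝ))),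
      ∀ x ∈ Metric.ball η (1/2), ‖F' x y‖ ≤ bound y := by
    refine Filter.Eventually.of_forall fun y => fun x hx => ?_
    have hgpos := gauss_pos hσ y
    have hDx := hDball x hx y
    have hsq : (M/2)^2 ≤ (Dfun σ μ M x y)^2 :=
      pow_le_pow_left₀ (by linarith) hDx 2
    have hdiv : |μ y - mubar σ μ| / (Dfun σ μ M x y)^2 ≤ ((M/2)^2)⁻¹ := by
      rw [← one_div]
      exact div_le_div₀ zero_le_one (habs1 y) (by positivity) hsq
    simp only [hF'_def, hbound_def]
    rw [Real.norm_eq_abs, abs_mul, abs_mul, abs_of_pos hC, abs_div,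
      abs_of_nonneg (sq_nonneg (Dfun σ μ M x y)), abs_mul,
      abs_of_pos hgpos]
    have h1 : C * (|μ y - mubar σ μ| / Dfun σ μ M x y ^ 2) ≤ C * ((M/2)^2)⁻¹ :=
      mul_le_mul_of_nonneg_left hdiv hC.le
    exact mul_le_mul_of_nonneg_right h1 (mul_nonneg (abs_nonneg y) hgpos.le)
  -- differentiability of the integrand
  have h_diff : ∀ᵐ y ∂(volume.restrict (Set.Ioi (0:ℝ))),
      ∀ x ∈ Metric.ball η (1/2), HasDerivAt (fun x => F x y) (F' x y) x := by
    refine Filter.Eventually.of_forall fun y => fun x hx => ?_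
    have hDne : Dfun σ μ M x y ≠ 0 := (hDball_pos x hx y).ne'
    have hp := hasDerivAt_popEx σ μ M x y hDne
    have h := ((((hp.const_mul cR1).const_add cR0).sub
      ((hp.const_mul cL1).const_add cL0)).const_mul y).mul_const (gauss σ y)
    refine HasDerivAt.congr_deriv h ?_
    simp only [hF'_def, hC_def]
    ring
  -- apply dominated differentiation
  obtain ⟨hFI', hderiv⟩ := hasDerivAt_integral_of_dominated_loc_of_deriv_le
    (Metric.ball_mem_nhds η (by norm_num : (0:ℝ) < 1/2))
    (Filter.Eventually.of_forall fun x => (hFmeas x).aestronglyMeasurable)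
    hF_int (hF'meas η).aestronglyMeasurable h_bound hbound_int h_diff
  have hPOL : HasDerivAt (POL σ μ M cR0 cR1 cL0 cL1)
      (2 * ∫ y in Set.Ioi (0:ℝ), F' η y) η := by
    have h2 := hderiv.const_mul (2:ℝ)
    exact h2
  refine ⟨hPOL.differentiableAt, ?_⟩
  rw [hPOL.deriv]
  have hIeq : ∫ y in Set.Ioi (0:ℝ), F' η y
      = C * ∫ y in Set.Ioi (0:ℝ),
          y * ((μ y - mubar σ μ) / (Dfun σ μ M η y) ^ 2) * gauss σ y := by
    rw [← integral_const_mul]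
    refine setIntegral_congr_fun measurableSet_Ioi fun y _ => ?_
    simp only [hF'_def]
    ring
  rw [hIeq]
  have hI := key_I_neg hσ hμmeas hμ hM heven hanti hη
  nlinarith
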